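/- arXiv:2204.11208 — 2 statements merged into one kernel-verified Lean document; each statement's English description precedes it below -/
import Mathlib

section
/- Let q = 2^m with m ≥ 2 and let C be the linear code over F_q of length q+1 generated by the rows of the 3×(q+1) matrix whose first q−1 columns are (1, α, α^2)^T for α ∈ F_q^*, followed by columns (1,0,0)^T and (0,1,1)^T. Then C contains a codeword of Hamming weight exactly q−2, so the minimum distance of C is q−2. -/
/-- Generator matrix with columns `(1, α, α²)ᵀ` for `α` ranging over the nonzero
elements of `F` (enumerated by `α`), followed by the columns `(1,0,0)ᵀ` and `(0,1,1)ᵀ`. -/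
def genMatrix {F : Type*} [Field F] [Fintype F]
    (α : Fin (Fintype.card F - 1) → F) :
    Matrix (Fin 3) (Fin (Fintype.card F + 1)) F :=
  fun i j =>
    if h : (j : ℕ) < Fintype.card F - 1 then (α ⟨j, h⟩) ^ (i : ℕ)
    else if (j : ℕ) = Fintype.card F - 1 then (if i = 0 then 1 else 0)
    else (if i = 0 then 0 else 1)

/-!
The first `q` columns of the generator matrix are the vectors `(1, x, x²)ᵀ` for all `x ∈ F_q`
(the column `(1,0,0)ᵀ` being the one of `x = 0`), so the codeword with message `(a₀, a₁, a₂)` is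
the list of values of `P = a₀ + a₁X + a₂X²` on `F_q`, followed by `a₁ + a₂`. A nonzero codeword
therefore has at most `2` zeros among the first `q` coordinates, hence weight at least `q - 2`.
In characteristic `2` the message `(0, 1, 1)` reaches this bound: `X + X² = X (X + 1)` vanishes
at `0` and `1`, and `1 + 1 = 0`.
-/

open Finset Polynomial

section Hamming

variable {ι κ β : Type*} [Fintype ι] [Fintype κ] [Zero β] [DecidableEq β]

theorem hammingNorm_comp_of_bijective (g : κ → β) {e : ι → κ} (he : e.Bijective) :
    hammingNorm (g ∘ e) = hammingNorm g :=
  card_bijective e he (by simp)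

theorem hammingNorm_add_card_filter_eq_zero (x : ι → β) :
    hammingNorm x + #{i | x i = 0} = Fintype.card ι := by
  rw [hammingNorm, add_comm, card_filter_add_card_filter_not, card_univ]

end Hamming

theorem card_filter_optionElim_eval_eq_zero_le {R : Type*} [CommRing R] [IsDomain R]
    [Fintype R] [DecidableEq R] (v : R) {P : R[X]} (hP : P ≠ 0) :
    #{o : Option R | o.elim v P.eval = 0} ≤ P.natDegree + 1 := by
  have hsub : ({o : Option R | o.elim v P.eval = 0} : Finset _) ⊆
      insert none (P.roots.toFinset.image some) := by
    rintro (_ | x) hx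
    · exact mem_insert_self _ _
    · simp_all
  calc #{o : Option R | o.elim v P.eval = 0}
      ≤ #(P.roots.toFinset.image some) + 1 := (card_le_card hsub).trans (card_insert_le _ _)
    _ ≤ P.natDegree + 1 := by
      gcongr
      exact card_image_le.trans ((Multiset.toFinset_card_le _).trans (card_roots' P))

section GenMatrix

variable {F : Type*} [Field F]

noncomputable def quadraticOf (a : Fin 3 → F) : F[X] := C (a 2) * X ^ 2 + C (a 1) * X + C (a 0)

noncomputable def messageEval (a : Fin 3 → F) (o : Option F) : F :=
  o.elim (a 1 + a 2) (quadraticOf a).eval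

theorem messageEval_eq_zero_of_quadraticOf_eq_zero {a : Fin 3 → F} (h : quadraticOf a = 0) :
    messageEval a = 0 := by
  have hcoeff (n : ℕ) : (quadraticOf a).coeff n = 0 := by rw [h, coeff_zero]
  have ha1 := hcoeff 1
  have ha2 := hcoeff 2
  simp only [quadraticOf, coeff_add, coeff_C_mul, coeff_X_pow, coeff_X, coeff_C] at ha1 ha2
  ext (_ | x)
  · simp_all [messageEval]
  · simp [messageEval, h]

variable [Fintype F]

/-- The point of `Option F` labelling the column `j` of `genMatrix α`: `some x` for the
column `(1, x, x²)ᵀ`, and `none` for the column `(0, 1, 1)ᵀ`. -/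
def columnPoint (α : Fin (Fintype.card F - 1) → F) (j : Fin (Fintype.card F + 1)) :
    Option F :=
  if h : (j : ℕ) < Fintype.card F - 1 then some (α ⟨j, h⟩)
  else if (j : ℕ) = Fintype.card F - 1 then some 0 else none

theorem columnPoint_bijective {α : Fin (Fintype.card F - 1) → F}
    (hinj : Function.Injective α) (h0 : ∀ i, α i ≠ 0) :
    Function.Bijective (columnPoint α) := by
  refine (Fintype.bijective_iff_injective_and_card _).2 ⟨fun j k hjk => ?_, by simp⟩
  have hj := j.isLt
  have hk := k.isLt
  unfold columnPoint at hjk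
  split_ifs at hjk
  · exact Fin.ext (by simpa using hinj (Option.some_injective _ hjk))
  all_goals first
    | exact Fin.ext (by omega)
    | exact absurd (Option.some_injective _ hjk) (h0 _)
    | exact absurd (Option.some_injective _ hjk).symm (h0 _)

theorem sum_smul_genMatrix (α : Fin (Fintype.card F - 1) → F) (a : Fin 3 → F) :
    ∑ i, a i • genMatrix α i = messageEval a ∘ columnPoint α := by
  ext j
  by_cases h₁ : (j : ℕ) < Fintype.card F - 1
  · simp [genMatrix, columnPoint, messageEval, quadraticOf, h₁, Fin.sum_univ_three]
    ring
  by_cases h₂ : (j : ℕ) = Fintype.card F - 1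
  · simp [genMatrix, columnPoint, messageEval, quadraticOf, h₂]
  · simp [genMatrix, columnPoint, messageEval, quadraticOf, h₁, h₂, Fin.sum_univ_three]

variable [DecidableEq F]

theorem card_filter_messageEval_eq_zero_le {a : Fin 3 → F} (ha : messageEval a ≠ 0) :
    #{o | messageEval a o = 0} ≤ 3 :=
  (card_filter_optionElim_eval_eq_zero_le _
      (mt messageEval_eq_zero_of_quadraticOf_eq_zero ha)).trans
    (Nat.add_le_add_right natDegree_quadratic_le 1)

theorem card_filter_messageEval_zero_one_one_eq_zero [CharP F 2] :
    #{o : Option F | messageEval ![0, 1, 1] o = 0} = 3 := by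
  have hzeros : ({o : Option F | messageEval ![0, 1, 1] o = 0} : Finset (Option F)) =
      {some 0, some 1, none} := by
    ext (_ | x)
    · simp [messageEval, CharTwo.add_self_eq_zero]
    · have hfactor : x ^ 2 + x = x * (x + 1) := by ring
      simp [messageEval, quadraticOf, hfactor, add_eq_zero_iff_eq_neg, CharTwo.neg_eq]
  rw [hzeros, card_insert_of_notMem (by simp), card_pair (by simp)]

theorem hammingNorm_sum_smul_genMatrix_add_card {α : Fin (Fintype.card F - 1) → F}
    (hinj : Function.Injective α) (h0 : ∀ i, α i ≠ 0) (a : Fin 3 → F) :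
    hammingNorm (∑ i, a i • genMatrix α i) + #{o | messageEval a o = 0} =
      Fintype.card F + 1 := by
  rw [sum_smul_genMatrix, hammingNorm_comp_of_bijective _ (columnPoint_bijective hinj h0),
    hammingNorm_add_card_filter_eq_zero, Fintype.card_option]

end GenMatrix

theorem stmt_13 {F : Type*} [Field F] [Fintype F] [DecidableEq F] (m : ℕ) (hm : 2 ≤ m)
    (hcard : Fintype.card F = 2 ^ m)
    (α : Fin (Fintype.card F - 1) → F) (hinj : Function.Injective α)
    (h0 : ∀ i, α i ≠ 0) :
    (∃ c ∈ (Submodule.span F (Set.range (genMatrix α)) :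
        Submodule F (Fin (Fintype.card F + 1) → F)),
      c ≠ 0 ∧ hammingNorm c = Fintype.card F - 2) ∧
    ∀ c ∈ (Submodule.span F (Set.range (genMatrix α)) :
        Submodule F (Fin (Fintype.card F + 1) → F)),
      c ≠ 0 → Fintype.card F - 2 ≤ hammingNorm c := by
  have hq : 4 ≤ Fintype.card F := hcard ▸ Nat.pow_le_pow_right two_pos hm
  have : CharP F 2 := charP_of_card_eq_prime_pow hcard
  have hweight := hammingNorm_sum_smul_genMatrix_add_card hinj h0
  refine ⟨⟨_, (Submodule.mem_span_range_iff_exists_fun F).2 ⟨![0, 1, 1], rfl⟩, ?_⟩, ?_⟩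
  · have h := hweight ![0, 1, 1]
    rw [card_filter_messageEval_zero_one_one_eq_zero] at h
    exact ⟨hammingNorm_ne_zero_iff.1 (by omega), by omega⟩
  · rintro c hc hne
    obtain ⟨a, rfl⟩ := (Submodule.mem_span_range_iff_exists_fun F).1 hc
    have ha : messageEval a ≠ 0 := fun h => hne (by rw [sum_smul_genMatrix, h]; rfl)
    have hzeros := card_filter_messageEval_eq_zero_le ha
    have hsum := hweight a
    omega
end

section
/- Let q = 2^m with m ≥ 3 odd. For x ∈ F_q \ {0,1}, set a = x^2/(x+1). Then a ∉ {0, 1}, and the number of unordered pairs {x, y} of distinct elements of F_q^* with (x+1)y^2 + (y+1)x^2 = 0 is exactly (q−2)/2. -/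
/-!
In characteristic 2, `(x + 1) y² + (y + 1) x² = (x + y)(xy + x + y)`, and `xy + x + y = 0` means
`(x + 1)(y + 1) = 1`, i.e. `y = x / (x + 1)`. This map is an involution of `F_q ∖ {0, 1}` whose
only fixed point in `F_q` is `0`, so the pairs are exactly its `(q - 2) / 2` orbits. Finally
`x² / (x + 1) = 1` would make `x` a primitive cube root of unity, impossible as `3 ∤ 2^m - 1`
for odd `m`.
-/

open Finset

theorem Finset.card_image_pair_mul_two {α : Type*} [DecidableEq α] {A : Finset α} {σ : α → α}
    (hmaps : ∀ x ∈ A, σ x ∈ A) (hinv : ∀ x ∈ A, σ (σ x) = x) (hfix : ∀ x ∈ A, σ x ≠ x) :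
    #(A.image fun x => ({x, σ x} : Finset α)) * 2 = #A := by
  have hfiber : ∀ x ∈ A, {z ∈ A | ({z, σ z} : Finset α) = {x, σ x}} = {x, σ x} := by
    intro x hx
    ext z
    simp only [mem_filter, mem_insert, mem_singleton]
    constructor
    · rintro ⟨-, hz⟩
      simpa [hz] using mem_insert_self z {σ z}
    · rintro (rfl | rfl)
      · exact ⟨hx, rfl⟩
      · exact ⟨hmaps x hx, by rw [hinv x hx, pair_comm]⟩
  rw [card_eq_sum_card_image (fun x => ({x, σ x} : Finset α)) A, eq_comm]
  refine sum_const_nat fun s hs => ?_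
  obtain ⟨x, hx, rfl⟩ := mem_image.mp hs
  rw [hfiber x hx, card_pair (hfix x hx).symm]

theorem Nat.not_three_dvd_two_pow_sub_one {m : ℕ} (hm : Odd m) : ¬ 3 ∣ 2 ^ m - 1 := by
  obtain ⟨k, rfl⟩ := hm
  have h4 : 4 ^ k % 3 = 1 := by rw [Nat.pow_mod]; simp
  rw [show 2 ^ (2 * k + 1) = 2 * 4 ^ k by rw [pow_succ, pow_mul]; ring]
  omega

theorem FiniteField.three_dvd_card_sub_one_of_sq_add_add_one_eq_zero {K : Type*} [Field K]
    [Fintype K] {x : K} (hx : x ^ 2 + x + 1 = 0) (hx1 : x ≠ 1) : 3 ∣ Fintype.card K - 1 := by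
  have hx0 : x ≠ 0 := by rintro rfl; simp at hx
  have hcube : x ^ 3 = 1 := by linear_combination (x - 1) * hx
  have horder : orderOf x = 3 :=
    orderOf_eq_prime hcube fun h => hx1 (by simpa using h)
  exact horder ▸ orderOf_dvd_of_pow_eq_one (FiniteField.pow_card_sub_one_eq_one x hx0)

theorem div_add_one_ne_one {K : Type*} [DivisionRing K] (x : K) : x / (x + 1) ≠ 1 := by
  intro h
  have hx : x + 1 ≠ 0 := fun h0 => by simp [h0] at h
  rw [div_eq_one_iff_eq hx] at h
  exact one_ne_zero (left_eq_add.mp h)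

namespace CharTwo

variable {F : Type*} [Field F] [CharP F 2]

theorem add_one_ne_zero {x : F} (hx : x ≠ 1) : x + 1 ≠ 0 := by
  rwa [← CharTwo.sub_eq_add, sub_ne_zero]

theorem add_ne_zero {x y : F} (hxy : x ≠ y) : x + y ≠ 0 := by
  rwa [← CharTwo.sub_eq_add, sub_ne_zero]

theorem mul_add_add_eq_zero_iff {x y : F} :
    x * y + x + y = 0 ↔ x ≠ 1 ∧ y = x / (x + 1) := by
  constructor
  · intro h
    have hx1 : x ≠ 1 := by
      rintro rfl
      exact one_ne_zero (by linear_combination h - y * CharTwo.two_eq_zero (R := F))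
    refine ⟨hx1, (eq_div_iff (add_one_ne_zero hx1)).mpr ?_⟩
    linear_combination h - x * CharTwo.two_eq_zero (R := F)
  · rintro ⟨hx1, rfl⟩
    linear_combination div_mul_cancel₀ x (add_one_ne_zero hx1) + x * CharTwo.two_eq_zero (R := F)

theorem sq_div_add_one_ne_one [Fintype F] (hq : ¬ 3 ∣ Fintype.card F - 1) {x : F}
    (hx1 : x ≠ 1) : x ^ 2 / (x + 1) ≠ 1 := by
  rw [Ne, div_eq_one_iff_eq (add_one_ne_zero hx1)]
  intro h
  exact hq (FiniteField.three_dvd_card_sub_one_of_sq_add_add_one_eq_zero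
    (by linear_combination h + (x + 1) * CharTwo.two_eq_zero (R := F)) hx1)

theorem pair_equation_iff {x y : F} (hxy : x ≠ y) :
    (x + 1) * y ^ 2 + (y + 1) * x ^ 2 = 0 ↔ x ≠ 1 ∧ y = x / (x + 1) := by
  have hfactor : (x + 1) * y ^ 2 + (y + 1) * x ^ 2 = (x + y) * (x * y + x + y) := by
    linear_combination -(x * y) * CharTwo.two_eq_zero (R := F)
  rw [hfactor, mul_eq_zero, or_iff_right (add_ne_zero hxy), mul_add_add_eq_zero_iff]

theorem div_add_one_ne_self {x : F} (hx0 : x ≠ 0) (hx1 : x ≠ 1) : x / (x + 1) ≠ x := by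
  intro h
  have hrel := mul_add_add_eq_zero_iff.mpr ⟨hx1, rfl⟩
  rw [h] at hrel
  exact hx0 (pow_eq_zero_iff two_ne_zero |>.mp
    (by linear_combination hrel - x * CharTwo.two_eq_zero (R := F)))

theorem div_add_one_div_add_one {x : F} (hx1 : x ≠ 1) :
    x / (x + 1) / (x / (x + 1) + 1) = x := by
  have hrel := mul_add_add_eq_zero_iff.mpr ⟨hx1, rfl⟩
  exact (mul_add_add_eq_zero_iff (x := x / (x + 1)) (y := x) |>.mp
    (by linear_combination hrel)).2.symm

theorem pair_condition_iff [DecidableEq F] (s : Finset F) :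
    (s.card = 2 ∧ ∃ x ∈ s, ∃ y ∈ s, x ≠ y ∧ x ≠ 0 ∧ y ≠ 0 ∧
        (x + 1) * y ^ 2 + (y + 1) * x ^ 2 = 0) ↔
      ∃ x, (x ≠ 0 ∧ x ≠ 1) ∧ {x, x / (x + 1)} = s := by
  constructor
  · rintro ⟨hs, x, hx, y, hy, hxy, hx0, -, hxy_rel⟩
    obtain ⟨hx1, rfl⟩ := (pair_equation_iff hxy).mp hxy_rel
    refine ⟨x, ⟨hx0, hx1⟩, ?_⟩
    exact eq_of_subset_of_card_le (insert_subset hx (singleton_subset_iff.mpr hy))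
      (by rw [hs, card_pair hxy])
  · rintro ⟨x, ⟨hx0, hx1⟩, rfl⟩
    have hne := div_add_one_ne_self hx0 hx1
    refine ⟨card_pair hne.symm, x, mem_insert_self _ _, _, mem_insert_of_mem (mem_singleton_self _),
      hne.symm, hx0, div_ne_zero hx0 (add_one_ne_zero hx1),
      (pair_equation_iff hne.symm).mpr ⟨hx1, rfl⟩⟩

theorem card_image_pair_div_add_one_mul_two [Fintype F] [DecidableEq F] :
    #((univ \ {0, 1}).image fun x : F => ({x, x / (x + 1)} : Finset F)) * 2 =
      Fintype.card F - 2 := by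
  rw [card_image_pair_mul_two, card_sdiff_of_subset (subset_univ _), card_univ,
    card_pair zero_ne_one]
  all_goals
    intro x hx
    simp only [mem_sdiff, mem_univ, mem_insert, mem_singleton, true_and, not_or] at hx ⊢
  · exact ⟨div_ne_zero hx.1 (add_one_ne_zero hx.2), div_add_one_ne_one x⟩
  · exact div_add_one_div_add_one hx.2
  · exact div_add_one_ne_self hx.1 hx.2

end CharTwo

theorem stmt_18_general {F : Type*} [Field F] [Fintype F] (m : ℕ) (hodd : Odd m)
    (hcard : Fintype.card F = 2 ^ m) :
    (∀ x : F, x ≠ 0 → x ≠ 1 → x ^ 2 / (x + 1) ≠ 0 ∧ x ^ 2 / (x + 1) ≠ 1) ∧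
    Set.ncard {s : Finset F | s.card = 2 ∧ ∃ x ∈ s, ∃ y ∈ s, x ≠ y ∧
        x ≠ 0 ∧ y ≠ 0 ∧ (x + 1) * y ^ 2 + (y + 1) * x ^ 2 = 0} =
      (2 ^ m - 2) / 2 := by
  classical
  have : Fact (Nat.Prime 2) := ⟨Nat.prime_two⟩
  have : CharP F 2 := charP_of_card_eq_prime_pow hcard
  refine ⟨fun x hx0 hx1 => ⟨div_ne_zero (pow_ne_zero 2 hx0) (CharTwo.add_one_ne_zero hx1),
    CharTwo.sq_div_add_one_ne_one (hcard ▸ Nat.not_three_dvd_two_pow_sub_one hodd) hx1⟩, ?_⟩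
  have hset : {s : Finset F | s.card = 2 ∧ ∃ x ∈ s, ∃ y ∈ s, x ≠ y ∧
      x ≠ 0 ∧ y ≠ 0 ∧ (x + 1) * y ^ 2 + (y + 1) * x ^ 2 = 0} =
      ↑((univ \ {0, 1}).image fun x : F => ({x, x / (x + 1)} : Finset F)) := by
    ext s
    simp only [Set.mem_ofPred_eq, CharTwo.pair_condition_iff, coe_image, Set.mem_image, mem_coe,
      mem_sdiff, mem_univ, mem_insert, mem_singleton, true_and, not_or]
  rw [hset, Set.ncard_coe_finset, ← hcard, ← CharTwo.card_image_pair_div_add_one_mul_two,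
    Nat.mul_div_cancel _ two_pos]

theorem stmt_18 {F : Type*} [Field F] [Fintype F] (m : ℕ) (hm : 3 ≤ m) (hodd : Odd m)
    (hcard : Fintype.card F = 2 ^ m) :
    (∀ x : F, x ≠ 0 → x ≠ 1 → x ^ 2 / (x + 1) ≠ 0 ∧ x ^ 2 / (x + 1) ≠ 1) ∧
    Set.ncard {s : Finset F | s.card = 2 ∧ ∃ x ∈ s, ∃ y ∈ s, x ≠ y ∧
        x ≠ 0 ∧ y ≠ 0 ∧ (x + 1) * y ^ 2 + (y + 1) * x ^ 2 = 0} =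
      (2 ^ m - 2) / 2 :=
  stmt_18_general m hodd hcard
end
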